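/- With the Moyal star product f ⋆ g = Σ_{k≥0} (1/(2i))^k (1/k!) P^k(f,g) on functions on ℝ², for A, B ∈ sl(2,ℝ) and their associated functions Ã, B̃ (affine in p), one has (iÃ) ⋆ (iB̃) - (iB̃) ⋆ (iÃ) = i·\widetilde{[A,B]}. -/

import Mathlib

open Real Complex

/-- Partial derivative in the direction of coordinate `i` (0 = p, 1 = q) on `ℝ × ℝ`,
for complex-valued functions. -/
noncomputable def pderiv2C (i : Fin 2) (f : ℝ × ℝ → ℂ) : ℝ × ℝ → ℂ :=
  if i = 0 then fun x => deriv (fun p => f (p, x.2)) x.1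
  else fun x => deriv (fun q => f (x.1, q)) x.2

/-- Iterated partial derivatives along a list of coordinate directions. -/
noncomputable def pderivsC (l : List (Fin 2)) (f : ℝ × ℝ → ℂ) : ℝ × ℝ → ℂ :=
  l.foldr pderiv2C f

/-- The standard symplectic matrix `Λ` on `ℝ²`: `Λ¹² = 1`, `Λ²¹ = -1`. -/
def sympΛC (i j : Fin 2) : ℂ :=
  if i = 0 ∧ j = 1 then 1 else if i = 1 ∧ j = 0 then -1 else 0

/-- The `k`-th Moyal bidifferential operator. -/
noncomputable def moyalPC (k : ℕ) (f g : ℝ × ℝ → ℂ) : ℝ × ℝ → ℂ := fun x =>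
  ∑ i : Fin k → Fin 2, ∑ j : Fin k → Fin 2,
    (∏ l : Fin k, sympΛC (i l) (j l)) *
      (pderivsC (List.ofFn i) f x * pderivsC (List.ofFn j) g x)

/-- The Moyal star product `f ⋆ g = Σ_{k≥0} (1/(2i))^k (1/k!) P^k(f,g)`. -/
noncomputable def moyalStar (f g : ℝ × ℝ → ℂ) : ℝ × ℝ → ℂ := fun x =>
  ∑' k : ℕ, (1 / (2 * Complex.I)) ^ k * (1 / (Nat.factorial k) : ℂ) * moyalPC k f g x

/-- The complex-valued Hamiltonian function associated to `A = a₁X + b₁H + c₁Y`. -/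
noncomputable def tildeFunC (lam a₁ b₁ c₁ : ℝ) : ℝ × ℝ → ℂ := fun x =>
  ((2 * a₁ * (x.1 * Real.cos x.2 - lam * Real.sin x.2) +
      2 * b₁ * (x.1 * Real.sin x.2 + lam * Real.cos x.2) - 2 * c₁ * x.1 : ℝ) : ℂ)

/-! The bidifferential operators satisfy `P^k(g, f) = (-1)^k P^k(f, g)` because `Λ` is
antisymmetric, so the even terms cancel in `f ⋆ g - g ⋆ f`. For `f`, `g` polynomial in `p` of
degree `< n`, `< m`, a nonzero term of `P^k(f, g)` differentiates `f` in `p` as often as it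
differentiates `g` in `q` and vice versa, so `P^k(f, g) = 0` once `k ≥ n + m - 1`. For `Ã`, `B̃`
affine in `p` only `P^1`, the Poisson bracket, survives, and `{Ã, B̃} = [A, B]~` follows from
`sin² + cos² = 1`. -/

open scoped ContDiff

lemma pderiv2C_zero_apply (f : ℝ × ℝ → ℂ) (x : ℝ × ℝ) :
    pderiv2C 0 f x = deriv (fun p => f (p, x.2)) x.1 := by
  simp [pderiv2C]

lemma pderiv2C_one_apply (f : ℝ × ℝ → ℂ) (x : ℝ × ℝ) :
    pderiv2C 1 f x = deriv (fun q => f (x.1, q)) x.2 := by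
  simp [pderiv2C]

lemma sympΛC_swap (i j : Fin 2) : sympΛC j i = -sympΛC i j := by
  fin_cases i <;> fin_cases j <;> simp [sympΛC]

lemma sympΛC_eq_zero_of_ne_rev {i j : Fin 2} (h : j ≠ i.rev) : sympΛC i j = 0 := by
  fin_cases i <;> fin_cases j <;> simp_all [sympΛC]

lemma moyalPC_swap (k : ℕ) (f g : ℝ × ℝ → ℂ) (x : ℝ × ℝ) :
    moyalPC k g f x = (-1) ^ k * moyalPC k f g x := by
  rw [moyalPC, Finset.sum_comm, moyalPC, Finset.mul_sum]
  refine Finset.sum_congr rfl fun i _ => ?_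
  rw [Finset.mul_sum]
  refine Finset.sum_congr rfl fun j _ => ?_
  simp only [sympΛC_swap (i _), Finset.prod_neg, Finset.card_univ, Fintype.card_fin]
  ring

lemma moyalPC_one (f g : ℝ × ℝ → ℂ) (x : ℝ × ℝ) :
    moyalPC 1 f g x = pderiv2C 0 f x * pderiv2C 1 g x - pderiv2C 1 f x * pderiv2C 0 g x := by
  have sum_fin_one (F : (Fin 1 → Fin 2) → ℂ) : ∑ i, F i = F ![0] + F ![1] := by
    rw [← (Equiv.funUnique (Fin 1) (Fin 2)).symm.sum_comp, Fin.sum_univ_two]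
    congr 2 <;> ext l <;> fin_cases l <;> rfl
  simp only [moyalPC, sum_fin_one]
  simp [sympΛC, pderivsC]
  ring

def DegreeLTInP (n : ℕ) (f : ℝ × ℝ → ℂ) : Prop :=
  ∃ u : ℕ → ℝ → ℂ, (∀ m, ContDiff ℝ ∞ (u m)) ∧
    f = fun x => ∑ m ∈ Finset.range n, u m x.2 * (x.1 : ℂ) ^ m

lemma hasDerivAt_sum_mul_pow (c : ℕ → ℂ) (n : ℕ) (p : ℝ) :
    HasDerivAt (fun p : ℝ => ∑ m ∈ Finset.range n, c m * (p : ℂ) ^ m)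
      (∑ m ∈ Finset.range (n - 1), c (m + 1) * ((m + 1 : ℕ) : ℂ) * (p : ℂ) ^ m) p := by
  have hterm (m : ℕ) : HasDerivAt (fun p : ℝ => c m * (p : ℂ) ^ m)
      (c m * ((m : ℂ) * (p : ℂ) ^ (m - 1))) p :=
    ((hasDerivAt_pow m (p : ℂ)).comp_ofReal).const_mul (c m)
  refine (HasDerivAt.fun_sum fun m _ => hterm m).congr_deriv ?_
  cases n with
  | zero => simp
  | succ n =>
    rw [Finset.sum_range_succ']
    simp [mul_assoc]

namespace DegreeLTInP

variable {n : ℕ} {f : ℝ × ℝ → ℂ}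

lemma eq_zero (hf : DegreeLTInP 0 f) : f = 0 := by
  obtain ⟨u, -, rfl⟩ := hf
  rfl

lemma pderiv2C_zero (hf : DegreeLTInP n f) : DegreeLTInP (n - 1) (pderiv2C 0 f) := by
  obtain ⟨u, hu, rfl⟩ := hf
  refine ⟨fun m q => u (m + 1) q * ((m + 1 : ℕ) : ℂ), fun m => (hu _).mul contDiff_const,
    ?_⟩
  funext x
  exact pderiv2C_zero_apply _ x ▸ (hasDerivAt_sum_mul_pow (fun m => u m x.2) n x.1).deriv

lemma pderiv2C_one (hf : DegreeLTInP n f) : DegreeLTInP n (pderiv2C 1 f) := by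
  obtain ⟨u, hu, rfl⟩ := hf
  have hu' (m : ℕ) := contDiff_infty_iff_deriv.1 (hu m)
  refine ⟨fun m => deriv (u m), fun m => (hu' m).2, ?_⟩
  funext x
  rw [pderiv2C_one_apply]
  exact (HasDerivAt.fun_sum fun m _ =>
    ((hu' m).1 x.2).hasDerivAt.mul_const ((x.1 : ℂ) ^ m)).deriv

lemma pderivsC (hf : DegreeLTInP n f) (l : List (Fin 2)) :
    DegreeLTInP (n - l.count 0) (pderivsC l f) := by
  induction l with
  | nil => exact hf
  | cons a l ih =>
    change DegreeLTInP _ (pderiv2C a (_root_.pderivsC l f))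
    fin_cases a
    · simpa [List.count_cons, Nat.sub_add_eq] using ih.pderiv2C_zero
    · simpa [List.count_cons] using ih.pderiv2C_one

lemma pderivsC_eq_zero (hf : DegreeLTInP n f) {l : List (Fin 2)} (hl : n ≤ l.count 0) :
    _root_.pderivsC l f = 0 :=
  (Nat.sub_eq_zero_of_le hl ▸ hf.pderivsC l).eq_zero

end DegreeLTInP

lemma List.count_zero_add_count_one (l : List (Fin 2)) : l.count 0 + l.count 1 = l.length := by
  induction l with
  | nil => rfl
  | cons a l ih => fin_cases a <;> simp <;> omega

lemma moyalPC_eq_zero_of_degreeLTInP {n m k : ℕ} {f g : ℝ × ℝ → ℂ} (hf : DegreeLTInP n f)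
    (hg : DegreeLTInP m g) (hk : n + m ≤ k + 1) : moyalPC k f g = 0 := by
  funext x
  refine Finset.sum_eq_zero fun i _ => Finset.sum_eq_zero fun j _ => ?_
  by_cases hij : ∀ l, j l = (i l).rev
  · have hj : List.ofFn j = (List.ofFn i).map Fin.rev := by
      rw [List.map_ofFn]
      exact congrArg List.ofFn (funext hij)
    have hcount_j : (List.ofFn j).count 0 = (List.ofFn i).count 1 := by
      rw [hj, ← List.count_map_of_injective _ _ Fin.rev_injective 1]
      rfl
    have hcount_i := (List.ofFn i).count_zero_add_count_one
    rw [List.length_ofFn] at hcount_i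
    rcases le_or_gt n ((List.ofFn i).count 0) with hi | hi
    · simp [hf.pderivsC_eq_zero hi]
    · simp [hg.pderivsC_eq_zero (l := List.ofFn j) (by omega)]
  · push Not at hij
    obtain ⟨l, hl⟩ := hij
    rw [Finset.prod_eq_zero (Finset.mem_univ l) (sympΛC_eq_zero_of_ne_rev hl), zero_mul]

lemma moyalStar_eq_sum_range {n m : ℕ} {f g : ℝ × ℝ → ℂ} (hf : DegreeLTInP n f)
    (hg : DegreeLTInP m g) (x : ℝ × ℝ) :
    moyalStar f g x = ∑ k ∈ Finset.range (n + m - 1),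
      (1 / (2 * Complex.I)) ^ k * (1 / (Nat.factorial k) : ℂ) * moyalPC k f g x := by
  refine tsum_eq_sum fun k hk => ?_
  rw [moyalPC_eq_zero_of_degreeLTInP hf hg (by simp at hk; omega), Pi.zero_apply, mul_zero]

lemma moyalStar_sub_moyalStar_of_degreeLTInP_two {f g : ℝ × ℝ → ℂ} (hf : DegreeLTInP 2 f)
    (hg : DegreeLTInP 2 g) :
    moyalStar f g - moyalStar g f = fun x => -Complex.I * moyalPC 1 f g x := by
  funext x
  rw [Pi.sub_apply, moyalStar_eq_sum_range hf hg, moyalStar_eq_sum_range hg hf]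
  simp only [moyalPC_swap _ f g, Finset.sum_range_succ, Finset.sum_range_zero]
  norm_num
  ring

lemma ContDiff.ofReal_comp {n : WithTop ℕ∞} {f : ℝ → ℝ} (hf : ContDiff ℝ n f) :
    ContDiff ℝ n (fun q => (f q : ℂ)) :=
  Complex.ofRealCLM.contDiff.comp hf

section TildeFun

variable (lam a b c : ℝ)

/-- `∂Ã/∂p`, a function of `q` alone. -/
noncomputable def tildeFunDp (q : ℝ) : ℝ :=
  2 * a * Real.cos q + 2 * b * Real.sin q - 2 * c

/-- `∂Ã/∂q`. -/
noncomputable def tildeFunDq (x : ℝ × ℝ) : ℝ :=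
  2 * a * (-x.1 * Real.sin x.2 - lam * Real.cos x.2) +
    2 * b * (x.1 * Real.cos x.2 - lam * Real.sin x.2)

lemma degreeLTInP_two_I_mul_tildeFunC :
    DegreeLTInP 2 (fun x => Complex.I * tildeFunC lam a b c x) := by
  refine ⟨fun m q => Complex.I * ((if m = 0 then 2 * lam * (b * Real.cos q - a * Real.sin q)
    else tildeFunDp a b c q : ℝ) : ℂ), fun m => ?_, ?_⟩
  · by_cases hm : m = 0 <;> simp only [hm, ↓reduceIte, tildeFunDp] <;>
      exact contDiff_const.mul (ContDiff.ofReal_comp (by fun_prop))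
  · funext x
    simp [Finset.sum_range_succ, tildeFunC, tildeFunDp]
    ring

lemma pderiv2C_zero_I_mul_tildeFunC (x : ℝ × ℝ) :
    pderiv2C 0 (fun x => Complex.I * tildeFunC lam a b c x) x =
      Complex.I * tildeFunDp a b c x.2 := by
  set β := 2 * lam * (b * Real.cos x.2 - a * Real.sin x.2)
  have hfun : (fun p : ℝ => Complex.I * tildeFunC lam a b c (p, x.2)) =
      fun p => Complex.I * ((tildeFunDp a b c x.2 * p + β : ℝ) : ℂ) := by
    funext p
    simp only [tildeFunC, tildeFunDp, β]
    push_cast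
    ring
  have hreal := ((hasDerivAt_id x.1).const_mul (tildeFunDp a b c x.2)).add_const β
  rw [mul_one] at hreal
  rw [pderiv2C_zero_apply, hfun]
  exact (hreal.ofReal_comp.const_mul Complex.I).deriv

lemma pderiv2C_one_I_mul_tildeFunC (x : ℝ × ℝ) :
    pderiv2C 1 (fun x => Complex.I * tildeFunC lam a b c x) x =
      Complex.I * tildeFunDq lam a b x := by
  have hcos := Real.hasDerivAt_cos x.2
  have hsin := Real.hasDerivAt_sin x.2
  have hreal : HasDerivAt (fun q => 2 * a * (x.1 * Real.cos q - lam * Real.sin q) +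
      2 * b * (x.1 * Real.sin q + lam * Real.cos q) - 2 * c * x.1) (tildeFunDq lam a b x) x.2 :=
    ((((hcos.const_mul x.1).sub (hsin.const_mul lam)).const_mul (2 * a)).add
      (((hsin.const_mul x.1).add (hcos.const_mul lam)).const_mul (2 * b))).sub_const _
      |>.congr_deriv (by rw [tildeFunDq]; ring)
  rw [pderiv2C_one_apply]
  exact (hreal.ofReal_comp.const_mul Complex.I).deriv

end TildeFun

lemma tilde_poissonBracket (lam a₁ b₁ c₁ a₂ b₂ c₂ : ℝ) (x : ℝ × ℝ) :
    ((tildeFunDp a₁ b₁ c₁ x.2 * tildeFunDq lam a₂ b₂ x -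
        tildeFunDq lam a₁ b₁ x * tildeFunDp a₂ b₂ c₂ x.2 : ℝ) : ℂ) =
      tildeFunC lam (2 * (b₁ * c₂ - b₂ * c₁)) (2 * (c₁ * a₂ - c₂ * a₁))
        (-2 * (a₁ * b₂ - a₂ * b₁)) x := by
  rw [tildeFunC, tildeFunDp, tildeFunDp, tildeFunDq, tildeFunDq]
  congr 1
  linear_combination (4 * (a₁ * b₂ - a₂ * b₁) * x.1) * Real.sin_sq_add_cos_sq x.2

theorem moyal_star_commutator (lam a₁ b₁ c₁ a₂ b₂ c₂ : ℝ) :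
    moyalStar (fun x => Complex.I * tildeFunC lam a₁ b₁ c₁ x)
        (fun x => Complex.I * tildeFunC lam a₂ b₂ c₂ x) -
      moyalStar (fun x => Complex.I * tildeFunC lam a₂ b₂ c₂ x)
        (fun x => Complex.I * tildeFunC lam a₁ b₁ c₁ x) =
    fun x => Complex.I *
      tildeFunC lam (2 * (b₁ * c₂ - b₂ * c₁)) (2 * (c₁ * a₂ - c₂ * a₁))
        (-2 * (a₁ * b₂ - a₂ * b₁)) x := by
  rw [moyalStar_sub_moyalStar_of_degreeLTInP_two (degreeLTInP_two_I_mul_tildeFunC ..)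
    (degreeLTInP_two_I_mul_tildeFunC ..)]
  funext x
  rw [moyalPC_one, pderiv2C_zero_I_mul_tildeFunC, pderiv2C_one_I_mul_tildeFunC,
    pderiv2C_zero_I_mul_tildeFunC, pderiv2C_one_I_mul_tildeFunC, ← tilde_poissonBracket]
  push_cast
  linear_combination (-Complex.I * (tildeFunDp a₁ b₁ c₁ x.2 * tildeFunDq lam a₂ b₂ x -
    tildeFunDq lam a₁ b₁ x * tildeFunDp a₂ b₂ c₂ x.2 : ℂ)) * Complex.I_sq
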